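/- Define τ_0,…,τ_{n+r-1} ∈ R by (1 + γ_{n-1}t + γ_{n-2}t^2 + ⋯ + γ_{n-r_1}t^{r_1})·(1 + b_{r-1}t + ⋯ + b_0 t^r)^{q_1+1} ≡ 1 + τ_{n+r-1}t + τ_{n+r-2}t^2 + ⋯ + τ_0 t^{n+r} (mod t^{n+r+1}) in R[[t]]. Then for every 0 ≤ i ≤ n+r−1, the difference c_i − τ_i lies in the ideal of R generated by ψ_0,…,ψ_{q_1r-1}. -/

import Mathlib

open MvPolynomial Matrix

noncomputable section

namespace TB

/-- The polynomial ring `ℂ[a_0,…,a_{n-1},b_0,…,b_{r-1}]`: variable `Sum.inl i` is `a_i`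
and `Sum.inr j` is `b_j`. -/
abbrev R (n r : ℕ) : Type := MvPolynomial (Fin n ⊕ Fin r) ℂ

/-- The power series `1 + (cf 1)·t + ⋯ + (cf m)·t^m`. -/
def ser {A : Type*} [CommRing A] (m : ℕ) (cf : ℕ → A) : PowerSeries A :=
  PowerSeries.mk fun k => if k = 0 then 1 else if k ≤ m then cf k else 0

/-- `1 + a_{n-1} t + ⋯ + a_0 t^n`. -/
def Aser (n r : ℕ) : PowerSeries (R n r) :=
  ser n fun k => if h : 1 ≤ k ∧ k ≤ n then X (Sum.inl ⟨n - k, by omega⟩) else 0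

/-- `1 + b_{r-1} t + ⋯ + b_0 t^r`. -/
def Bser (n r : ℕ) : PowerSeries (R n r) :=
  ser r fun k => if h : 1 ≤ k ∧ k ≤ r then X (Sum.inr ⟨r - k, by omega⟩) else 0

/-- `1 + d_{n-1} t + ⋯ + d_0 t^n`. -/
def Dser (n r : ℕ) (d : Fin n → R n r) : PowerSeries (R n r) :=
  ser n fun k => if h : 1 ≤ k ∧ k ≤ n then d ⟨n - k, by omega⟩ else 0

/-- `1 + d_{n-1} t + ⋯ + d_1 t^{n-1}`. -/
def Dhatser (n r : ℕ) (d : Fin n → R n r) : PowerSeries (R n r) :=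
  ser (n - 1) fun k => if h : 1 ≤ k ∧ k ≤ n - 1 then d ⟨n - k, by omega⟩ else 0

/-- `f(x) = x^n + a_{n-1}x^{n-1} + ⋯ + a_0`. -/
def fpoly (n r : ℕ) : Polynomial (R n r) :=
  Polynomial.X ^ n + ∑ i : Fin n, Polynomial.C (X (Sum.inl i)) * Polynomial.X ^ (i : ℕ)

/-- `g(x) = x^r + b_{r-1}x^{r-1} + ⋯ + b_0`. -/
def gpoly (n r : ℕ) : Polynomial (R n r) :=
  Polynomial.X ^ r + ∑ j : Fin r, Polynomial.C (X (Sum.inr j)) * Polynomial.X ^ (j : ℕ)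

/-- The coefficient `c_k` of `f·g`, for `0 ≤ k ≤ n+r-1`. -/
def cc (n r : ℕ) (k : Fin (n + r)) : R n r := (fpoly n r * gpoly n r).coeff (k : ℕ)

/-- `d_0, …, d_{n-1}` are the unique polynomials with
`(1 + b_{r-1}t + ⋯ + b_0 t^r)(1 + d_{n-1}t + ⋯ + d_0 t^n) ≡ 1 + a_{n-1}t + ⋯ + a_0 t^n (mod t^{n+1})`. -/
def dSpec (n r : ℕ) (d : Fin n → R n r) : Prop :=
  ∀ k ≤ n, PowerSeries.coeff k (Bser n r * Dser n r d)
    = PowerSeries.coeff k (Aser n r)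

/-- `ψ_i = d_i` for `0 ≤ i ≤ r-1`, and
`ψ_{s·r+i} = ∂^s d_{r-1} / (∂b_0^{s-1} ∂b_{r-1-i})` for `s ≥ 1`, `0 ≤ i ≤ r-1`. -/
def psi (n r : ℕ) (hr : 0 < r) (hrn : r ≤ n) (d : Fin n → R n r) (m : ℕ) : R n r :=
  if h : m < r then d ⟨m, by omega⟩
  else
    (fun q => pderiv (Sum.inr (⟨0, hr⟩ : Fin r)) q)^[m / r - 1]
      (pderiv (Sum.inr (⟨r - 1 - m % r, by omega⟩ : Fin r)) (d ⟨r - 1, by omega⟩))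

/-- The `m×m` lower shift matrix over `R n r`. -/
def Lmat (n r m : ℕ) : Matrix (Fin m) (Fin m) (R n r) :=
  Matrix.of fun i j => if (i : ℕ) = (j : ℕ) + 1 then 1 else 0

/-- `B = I_n + b_{r-1}L_n + ⋯ + b_0 L_n^r`. -/
def Bmat (n r : ℕ) (hr : 0 < r) : Matrix (Fin n) (Fin n) (R n r) :=
  1 + ∑ k ∈ Finset.range r, (X (Sum.inr (⟨r - 1 - k, by omega⟩ : Fin r)) : R n r) • Lmat n r n ^ (k + 1)

/-- `D̂ = I_n + d_{n-1}L_n + ⋯ + d_1 L_n^{n-1}`. -/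
def Dhat (n r : ℕ) (hn : 0 < n) (d : Fin n → R n r) : Matrix (Fin n) (Fin n) (R n r) :=
  1 + ∑ k ∈ Finset.range (n - 1), d ⟨n - 1 - k, by omega⟩ • Lmat n r n ^ (k + 1)

/-- `D`: the first `r` columns of `D̂`. -/
def Dmat (n r : ℕ) (hn : 0 < n) (hrn : r ≤ n) (d : Fin n → R n r) :
    Matrix (Fin n) (Fin r) (R n r) :=
  (Dhat n r hn d).submatrix id (Fin.castLE hrn)

/-- `Â = I_n + a_{n-1}L_n + ⋯ + a_1 L_n^{n-1}`. -/
def Ahat (n r : ℕ) (hn : 0 < n) : Matrix (Fin n) (Fin n) (R n r) :=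
  1 + ∑ k ∈ Finset.range (n - 1),
    (X (Sum.inl (⟨n - 1 - k, by omega⟩ : Fin n)) : R n r) • Lmat n r n ^ (k + 1)

/-- `A`: the first `r` columns of `Â`. -/
def Amat (n r : ℕ) (hn : 0 < n) (hrn : r ≤ n) : Matrix (Fin n) (Fin r) (R n r) :=
  (Ahat n r hn).submatrix id (Fin.castLE hrn)

/-- The Jacobian matrix of a family `p` of elements of `R n r`: the row of index `i` is
`(∂p_i/∂a_{n-1}, …, ∂p_i/∂a_0, ∂p_i/∂b_{r-1}, …, ∂p_i/∂b_0)`. -/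
def jac {n r : ℕ} {ι : Type*} (p : ι → R n r) : Matrix ι (Fin (n + r)) (R n r) :=
  Matrix.of fun i j =>
    if h : (j : ℕ) < n then pderiv (Sum.inl (⟨n - 1 - (j : ℕ), by omega⟩ : Fin n)) (p i)
    else
      pderiv (Sum.inr (⟨r - 1 - ((j : ℕ) - n), by have := j.isLt; omega⟩ : Fin r)) (p i)

/-- The set of all `k×k` minors of a matrix. -/
def minorsSet {n r : ℕ} {ι : Type*} (k : ℕ) (M : Matrix ι (Fin (n + r)) (R n r)) :
    Set (R n r) :=
  { x | ∃ (ri : Fin k → ι) (ci : Fin k → Fin (n + r)), x = (M.submatrix ri ci).det }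

/-- Evaluation at the origin `a_i = b_j = 0`. -/
def ev0 (n r : ℕ) : R n r →+* ℂ := eval fun _ => 0

/-- The maximal ideal `(a_0,…,a_{n-1},b_0,…,b_{r-1})`. -/
def mIdeal (n r : ℕ) : Ideal (R n r) :=
  Ideal.span (Set.range (X : (Fin n ⊕ Fin r) → R n r))

/-- `1 + g_1 t + ⋯ + g_{r_1} t^{r_1}` over `S = ℂ[g_1,…,g_{r_1},b_0,…,b_{r-1}] = R r1 r`,
where `g_k` is the variable `Sum.inl ⟨k-1⟩`. -/
def Gser (r1 r : ℕ) : PowerSeries (R r1 r) :=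
  ser r1 fun k => if h : 1 ≤ k ∧ k ≤ r1 then X (Sum.inl ⟨k - 1, by omega⟩) else 0

/-- `1 + w_{r-1} t + ⋯ + w_0 t^r`. -/
def Wser (r1 r : ℕ) (w : Fin r → R r1 r) : PowerSeries (R r1 r) :=
  ser r fun k => if h : 1 ≤ k ∧ k ≤ r then w ⟨r - k, by omega⟩ else 0

/-- `1 + w_{r-1} t + ⋯ + w_1 t^{r-1}`. -/
def Whatser (r1 r : ℕ) (w : Fin r → R r1 r) : PowerSeries (R r1 r) :=
  ser (r - 1) fun k => if h : 1 ≤ k ∧ k ≤ r - 1 then w ⟨r - k, by omega⟩ else 0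

/-- `w_0,…,w_{r-1}` are the unique polynomials with
`(1 + g_1 t + ⋯ + g_{r_1}t^{r_1})(1 + w_{r-1}t + ⋯ + w_0 t^r) ≡ 1 + b_{r-1}t + ⋯ + b_0 t^r
(mod t^{r+1})`. -/
def wSpec (r1 r : ℕ) (w : Fin r → R r1 r) : Prop :=
  ∀ k ≤ r, PowerSeries.coeff k (Gser r1 r * Wser r1 r w)
    = PowerSeries.coeff k (Bser r1 r)

/-- `φ'_i = w_i` for `0 ≤ i ≤ r_1-1`, and
`φ'_{s·r_1+i} = ∂^s w_{r_1-1} / (∂g_{r_1}^{s-1} ∂g_{1+i})` for `s ≥ 1`, `0 ≤ i ≤ r_1-1`. -/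
def phi' (r1 r : ℕ) (h1 : 0 < r1) (h2 : r1 < r) (w : Fin r → R r1 r) (m : ℕ) : R r1 r :=
  if h : m < r1 then w ⟨m, by omega⟩
  else
    (fun q => pderiv (Sum.inl (⟨r1 - 1, by omega⟩ : Fin r1)) q)^[m / r1 - 1]
      (pderiv (Sum.inl (⟨m % r1, Nat.mod_lt m h1⟩ : Fin r1)) (w ⟨r1 - 1, by omega⟩))

/-- The substitution `g_k ↦ γ_{n-k}`, `b_j ↦ b_j`, from `S = R r1 r` to `R n r`. -/
def subst (n r r1 : ℕ) (γ : ℕ → R n r) : R r1 r →ₐ[ℂ] R n r :=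
  aeval (Sum.elim (fun i : Fin r1 => γ (n - ((i : ℕ) + 1))) fun j : Fin r => X (Sum.inr j))


/-- From `n = q_1·r + r_1` with `q_1 ≥ 1` we get `r ≤ n`. -/
theorem rle (q1 r r1 n : ℕ) (hq1 : 1 ≤ q1) (hn : n = q1 * r + r1) : r ≤ n := by
  have := Nat.le_mul_of_pos_left r hq1
  omega

/-!
Write `A = 1 + a_{n-1}t + ⋯`, `B = 1 + b_{r-1}t + ⋯` and `D = 1 + d_{n-1}t + ⋯`, so that
`A = B·D + t^{n+1}·E` with all coefficients of `E` in `(d_0, …, d_{r-1}) = (ψ_0, …, ψ_{r-1})`.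
Differentiating coefficientwise in `b_j`, where `∂A = 0` and `∂B = t^{r-j}`, gives
`∂D ≡ -t^{r-j}·B⁻¹·D (mod t^{n+1})`. Comparing two coefficients of this yields
`∂d_m/∂b_0 = ∂d_{r-1}/∂b_{r-1-m}`, i.e. `∂ψ_m/∂b_0 = ψ_{m+r}`, so `∂/∂b_0` maps the ideal
`(ψ_0, …, ψ_{k-1})` into `(ψ_0, …, ψ_{k+r-1})`. Since `∂(B^{-s}·D)/∂b_0` is
`-(s+1)·t^r·B^{-(s+1)}·D` up to `t^{n+1}` times a series with coefficients in `(ψ_0, …, ψ_{2r-1})`,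
induction on `s` (dividing by `s+1` in characteristic zero) shows that the coefficients of `t^j`
in `B^{-s}·D` with `j + (s+1)r > n` lie in `(ψ_0, …, ψ_{(s+1)r-1})`.

For `s = q_1 - 1` this says that modulo `J = (ψ_0, …, ψ_{q_1 r-1})` the series `B^{-(q_1-1)}·D`
is the polynomial `1 + γ_{n-1}t + ⋯ + γ_{n-r_1}t^{r_1}`, because its low coefficients agree with
those of `B^{-q_1}·A`. Hence `A·B ≡ B²·D ≡ (1 + γ_{n-1}t + ⋯)·B^{q_1+1} (mod J)`, and `A·B` is
the reversal of `f·g`, whose coefficients are the `c_i`.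
-/

lemma _root_.Ideal.mem_of_nsmul_mem {S : Type*} [CommRing S] [Algebra ℚ S] (I : Ideal S) {m : ℕ}
    (hm : m ≠ 0) {x : S} (h : m • x ∈ I) : x ∈ I := by
  rw [nsmul_eq_mul] at h
  refine (I.unit_mul_mem_iff_mem ?_).1 h
  simpa using (Nat.cast_ne_zero.2 hm : (m : ℚ) ≠ 0).isUnit.map (algebraMap ℚ S)

section CoeffDeriv

variable {R A : Type*} [CommRing R] [CommRing A] [Algebra R A]

def coeffDeriv (δ : Derivation R A A) : Derivation R (PowerSeries A) (PowerSeries A) :=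
  Derivation.mk'
    { toFun := fun F => PowerSeries.mk fun k => δ (PowerSeries.coeff k F)
      map_add' := fun F G => by ext; simp
      map_smul' := fun c F => by ext; simp }
    fun F G => by
      ext k
      rw [smul_eq_mul G, mul_comm G]
      simp only [LinearMap.coe_mk, AddHom.coe_mk, PowerSeries.coeff_mk, smul_eq_mul, map_add,
        PowerSeries.coeff_mul, map_sum, Derivation.leibniz, ← Finset.sum_add_distrib]
      exact Finset.sum_congr rfl fun _ _ => by ring

@[simp]
lemma coeff_coeffDeriv (δ : Derivation R A A) (F : PowerSeries A) (k : ℕ) :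
    PowerSeries.coeff k (coeffDeriv δ F) = δ (PowerSeries.coeff k F) := by
  simp [coeffDeriv]

lemma coeffDeriv_X_pow (δ : Derivation R A A) (m : ℕ) :
    coeffDeriv δ (PowerSeries.X ^ m) = 0 := by
  ext k
  rw [coeff_coeffDeriv, PowerSeries.coeff_X_pow]
  split_ifs <;> simp

end CoeffDeriv

lemma _root_.Derivation.apply_mem_of_mem_span {R S : Type*} [CommRing R] [CommRing S] [Algebra R S]
    (δ : Derivation R S S) {s : Set S} {I : Ideal S} (hsI : Ideal.span s ≤ I)
    (hδ : ∀ x ∈ s, δ x ∈ I) {x : S} (hx : x ∈ Ideal.span s) : δ x ∈ I := by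
  induction hx using Submodule.span_induction with
  | mem y hy => exact hδ y hy
  | zero => simp
  | add y z _ _ hy hz => rw [map_add]; exact I.add_mem hy hz
  | smul a y hy hδy =>
    rw [smul_eq_mul, Derivation.leibniz, smul_eq_mul, smul_eq_mul]
    exact I.add_mem (I.mul_mem_left a hδy) (I.mul_mem_right _ (hsI hy))

section CoeffIdeal

variable {S : Type*} [CommRing S] (I : Ideal S)

lemma _root_.PowerSeries.coeff_mul_mem_of_forall_coeff_mem {F G : PowerSeries S}
    (hG : ∀ j, PowerSeries.coeff j G ∈ I) (k : ℕ) : PowerSeries.coeff k (F * G) ∈ I := by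
  rw [PowerSeries.coeff_mul]
  exact I.sum_mem fun p _ => I.mul_mem_left _ (hG p.2)

lemma _root_.PowerSeries.coeff_mul_mem_of_coeff_eq_zero {F G : PowerSeries S} {dF m : ℕ}
    (hF : ∀ i, dF < i → PowerSeries.coeff i F = 0)
    (hG : ∀ j, m ≤ j → PowerSeries.coeff j G ∈ I) {k : ℕ} (hk : m + dF ≤ k) :
    PowerSeries.coeff k (F * G) ∈ I := by
  rw [PowerSeries.coeff_mul]
  refine I.sum_mem fun p hp => ?_
  rw [Finset.HasAntidiagonal.mem_antidiagonal] at hp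
  by_cases h : dF < p.1
  · rw [hF _ h, zero_mul]; exact I.zero_mem
  · exact I.mul_mem_left _ (hG p.2 (by omega))

end CoeffIdeal

section Reverse

variable {A : Type*} [CommRing A]

@[simp]
lemma coeff_ser (m : ℕ) (cf : ℕ → A) (k : ℕ) :
    PowerSeries.coeff k (ser m cf) = if k = 0 then 1 else if k ≤ m then cf k else 0 := by
  simp [ser]

@[simp]
lemma constantCoeff_ser (m : ℕ) (cf : ℕ → A) : PowerSeries.constantCoeff (ser m cf) = 1 := by
  simp [← PowerSeries.coeff_zero_eq_constantCoeff]

lemma monic_X_pow_add_sum (m : ℕ) (c : Fin m → A) :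
    (Polynomial.X ^ m + ∑ i : Fin m, Polynomial.C (c i) * Polynomial.X ^ (i : ℕ)).Monic :=
  Polynomial.monic_X_pow_add (Polynomial.degree_sum_fin_lt c)

lemma natDegree_X_pow_add_sum [Nontrivial A] (m : ℕ) (c : Fin m → A) :
    (Polynomial.X ^ m + ∑ i : Fin m, Polynomial.C (c i) * Polynomial.X ^ (i : ℕ)).natDegree =
      m := by
  rw [Polynomial.natDegree_add_eq_left_of_degree_lt, Polynomial.natDegree_X_pow]
  rw [Polynomial.degree_X_pow]
  exact Polynomial.degree_sum_fin_lt c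

lemma coeff_X_pow_add_sum (m : ℕ) (c : Fin m → A) (j : ℕ) :
    (Polynomial.X ^ m + ∑ i : Fin m, Polynomial.C (c i) * Polynomial.X ^ (i : ℕ)).coeff j =
      if h : j < m then c ⟨j, h⟩ else if j = m then 1 else 0 := by
  simp only [Polynomial.coeff_add, Polynomial.coeff_X_pow, Polynomial.finsetSum_coeff,
    Polynomial.coeff_C_mul]
  by_cases hj : j < m
  · rw [dif_pos hj, if_neg hj.ne, Finset.sum_eq_single ⟨j, hj⟩ (fun i _ hi => by
      rw [if_neg (fun h => hi (Fin.ext h.symm)), mul_zero]) (by simp)]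
    simp
  · rw [dif_neg hj, Finset.sum_eq_zero (fun (i : Fin m) _ => by
      rw [if_neg (by omega), mul_zero]), add_zero]

lemma coe_reverse_X_pow_add_sum [Nontrivial A] (m : ℕ) (c : Fin m → A) :
    ((Polynomial.X ^ m + ∑ i : Fin m, Polynomial.C (c i) * Polynomial.X ^ (i : ℕ)).reverse :
        PowerSeries A) =
      ser m fun k => if h : 1 ≤ k ∧ k ≤ m then c ⟨m - k, by omega⟩ else 0 := by
  ext k
  rw [Polynomial.coeff_coe, Polynomial.coeff_reverse, natDegree_X_pow_add_sum, coeff_ser,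
    coeff_X_pow_add_sum]
  by_cases hk : k ≤ m
  · rw [Polynomial.revAt_le hk]
    rcases Nat.eq_zero_or_pos k with rfl | hk0
    · simp
    · rw [dif_pos (by omega), if_neg hk0.ne', if_pos hk, dif_pos ⟨hk0, hk⟩]
  · rw [Polynomial.revAt_eq_self_of_lt (by omega), dif_neg (by omega), if_neg (by omega),
      if_neg (by omega), if_neg hk]

end Reverse

section Series

variable {n r : ℕ}

lemma cc_eq_coeff_Aser_mul_Bser (i : Fin (n + r)) :
    cc n r i = PowerSeries.coeff (n + r - i) (Aser n r * Bser n r) := by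
  have hrev : ((fpoly n r * gpoly n r).reverse : PowerSeries (R n r)) = Aser n r * Bser n r := by
    rw [Polynomial.reverse_mul_of_domain, Polynomial.coe_mul, fpoly, gpoly,
      coe_reverse_X_pow_add_sum, coe_reverse_X_pow_add_sum]
    rfl
  have hdeg : (fpoly n r * gpoly n r).natDegree = n + r := by
    rw [fpoly, gpoly, (monic_X_pow_add_sum _ _).natDegree_mul (monic_X_pow_add_sum _ _),
      natDegree_X_pow_add_sum, natDegree_X_pow_add_sum]
  rw [← hrev, Polynomial.coeff_coe, Polynomial.coeff_reverse, cc, hdeg,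
    Polynomial.revAt_le (by omega), Nat.sub_sub_self i.isLt.le]

lemma coeff_Aser_of_lt {k : ℕ} (hk : n < k) : PowerSeries.coeff k (Aser n r) = 0 := by
  rw [Aser, coeff_ser, if_neg (by omega), if_neg (by omega)]

lemma coeff_Bser_of_lt {k : ℕ} (hk : r < k) : PowerSeries.coeff k (Bser n r) = 0 := by
  rw [Bser, coeff_ser, if_neg (by omega), if_neg (by omega)]

lemma coeff_Dser {d : Fin n → R n r} {k : ℕ} (hk0 : 1 ≤ k) (hk : k ≤ n) :
    PowerSeries.coeff k (Dser n r d) = d ⟨n - k, by omega⟩ := by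
  rw [Dser, coeff_ser, if_neg (by omega), if_pos hk, dif_pos ⟨hk0, hk⟩]

lemma coeffDeriv_pderiv_Aser (j : Fin r) : coeffDeriv (pderiv (Sum.inr j)) (Aser n r) = 0 := by
  ext k
  simp only [coeff_coeffDeriv, Aser, coeff_ser, map_zero]
  split_ifs <;> simp

lemma coeffDeriv_pderiv_Bser (j : Fin r) :
    coeffDeriv (pderiv (Sum.inr j)) (Bser n r) = PowerSeries.X ^ (r - (j : ℕ)) := by
  ext k
  simp only [coeff_coeffDeriv, Bser, coeff_ser, PowerSeries.coeff_X_pow]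
  have := j.isLt
  by_cases hkj : k = r - j
  · have hj : (⟨r - k, by omega⟩ : Fin r) = j := Fin.ext (by simp only; omega)
    rw [if_neg (by omega), if_pos (by omega), dif_pos (by omega), if_pos hkj, hj,
      pderiv_X_self]
  · split_ifs with h0 hk h1
    · simp
    · rw [pderiv_X_of_ne]
      intro h
      exact hkj (by have := Fin.val_eq_of_eq (Sum.inr_injective h); simp only at this; omega)
    · simp
    · simp

section PsiIdeal

variable (hr : 0 < r) (hrn : r ≤ n) (d : Fin n → R n r)

def psiIdeal (k : ℕ) : Ideal (R n r) :=
  Ideal.span (Set.range fun m : Fin k => psi n r hr hrn d m)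

variable {hr hrn d}

lemma psi_mem_psiIdeal {k m : ℕ} (hm : m < k) : psi n r hr hrn d m ∈ psiIdeal hr hrn d k :=
  Ideal.subset_span ⟨⟨m, hm⟩, rfl⟩

lemma psiIdeal_mono {k k' : ℕ} (h : k ≤ k') : psiIdeal hr hrn d k ≤ psiIdeal hr hrn d k' :=
  Ideal.span_mono <| Set.range_subset_iff.2 fun m => ⟨⟨m, m.isLt.trans_le h⟩, rfl⟩

lemma coeff_Dser_mem_psiIdeal {j : ℕ} (hj : n + 1 ≤ j + r) :
    PowerSeries.coeff j (Dser n r d) ∈ psiIdeal hr hrn d r := by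
  by_cases hjn : j ≤ n
  · rw [coeff_Dser (by omega) hjn]
    convert psi_mem_psiIdeal (hr := hr) (hrn := hrn) (d := d) (show n - j < r by omega)
    rw [psi, dif_pos (by omega)]
  · rw [Dser, coeff_ser, if_neg (by omega), if_neg hjn]
    exact Ideal.zero_mem _

lemma coeff_Bser_mul_Dser_mem_psiIdeal {k : ℕ} (hk : n < k) :
    PowerSeries.coeff k (Bser n r * Dser n r d) ∈ psiIdeal hr hrn d r :=
  PowerSeries.coeff_mul_mem_of_coeff_eq_zero (m := n + 1 - r) _
    (fun _ hi => coeff_Bser_of_lt hi) (fun _ hj => coeff_Dser_mem_psiIdeal (by omega))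
    (by omega)

end PsiIdeal

lemma coeffDeriv_pderiv_Binv_pow {Binv : PowerSeries (R n r)} (hBinv : Bser n r * Binv = 1)
    (j : Fin r) (s : ℕ) :
    coeffDeriv (pderiv (Sum.inr j)) (Binv ^ s) =
      -(s • (PowerSeries.X ^ (r - (j : ℕ)) * Binv ^ (s + 1))) := by
  have hinv := (coeffDeriv (pderiv (Sum.inr j))).leibniz_of_mul_eq_one
    ((mul_comm _ _).trans hBinv)
  rw [coeffDeriv_pderiv_Bser, smul_eq_mul] at hinv
  induction s with
  | zero => simp
  | succ s ih =>
    rw [pow_succ, Derivation.leibniz, ih, hinv, smul_eq_mul, smul_eq_mul]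
    ring

section Remainder

variable {hr : 0 < r} {hrn : r ≤ n} {d : Fin n → R n r} {Binv E : PowerSeries (R n r)}
  (hBinv : Bser n r * Binv = 1)
  (hE : Aser n r = Bser n r * Dser n r d + PowerSeries.X ^ (n + 1) * E)
include hE

lemma coeff_remainder_mem_psiIdeal (m : ℕ) :
    PowerSeries.coeff m E ∈ psiIdeal hr hrn d r := by
  have h := congrArg (PowerSeries.coeff (m + (n + 1))) hE
  rw [coeff_Aser_of_lt (by omega), map_add, PowerSeries.coeff_X_pow_mul] at h
  rw [eq_neg_of_add_eq_zero_right h.symm]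
  exact neg_mem (coeff_Bser_mul_Dser_mem_psiIdeal (by omega))

include hBinv

lemma coeffDeriv_pderiv_Dser (j : Fin r) :
    coeffDeriv (pderiv (Sum.inr j)) (Dser n r d) =
      -(PowerSeries.X ^ (r - (j : ℕ)) * (Binv * Dser n r d))
        - PowerSeries.X ^ (n + 1) * (Binv * coeffDeriv (pderiv (Sum.inr j)) E) := by
  have h := congrArg (coeffDeriv (pderiv (Sum.inr j))) hE
  simp only [coeffDeriv_pderiv_Aser, map_add, Derivation.leibniz, coeffDeriv_pderiv_Bser,
    coeffDeriv_X_pow, smul_eq_mul, mul_zero, add_zero] at h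
  linear_combination (-Binv) * h - coeffDeriv (pderiv (Sum.inr j)) (Dser n r d) * hBinv

lemma pderiv_coeff_Dser (j : Fin r) {k : ℕ} (hk : k ≤ n) :
    pderiv (Sum.inr j) (PowerSeries.coeff k (Dser n r d)) =
      -PowerSeries.coeff k (PowerSeries.X ^ (r - (j : ℕ)) * (Binv * Dser n r d)) := by
  rw [← coeff_coeffDeriv, coeffDeriv_pderiv_Dser hBinv hE, map_sub, map_neg,
    PowerSeries.coeff_X_pow_mul' _ (n + 1), if_neg (by omega), sub_zero]

/-- Both sides are `-coeff (n - r - m) (Binv * Dser)`. -/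
lemma pderiv_b0_d {m : ℕ} (hm : m < r) :
    pderiv (Sum.inr (⟨0, hr⟩ : Fin r)) (d ⟨m, by omega⟩) =
      pderiv (Sum.inr (⟨r - 1 - m, by omega⟩ : Fin r)) (d ⟨r - 1, by omega⟩) := by
  have e₁ := pderiv_coeff_Dser hBinv hE ⟨0, hr⟩ (k := n - m) (by omega)
  have e₂ := pderiv_coeff_Dser hBinv hE ⟨r - 1 - m, by omega⟩ (k := n - r + 1) (by omega)
  rw [coeff_Dser (by omega) (by omega)] at e₁ e₂
  rw [show (⟨n - (n - m), _⟩ : Fin n) = ⟨m, by omega⟩ from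
    Fin.ext (by simp only; omega)] at e₁
  rw [show (⟨n - (n - r + 1), _⟩ : Fin n) = ⟨r - 1, by omega⟩ from
    Fin.ext (by simp only; omega)] at e₂
  rw [e₁, e₂, PowerSeries.coeff_X_pow_mul', PowerSeries.coeff_X_pow_mul']
  dsimp only
  split_ifs <;> first | omega | rfl | (congr 3; omega)

lemma pderiv_b0_psi (m : ℕ) :
    pderiv (Sum.inr (⟨0, hr⟩ : Fin r)) (psi n r hr hrn d m) = psi n r hr hrn d (m + r) := by
  have hmod : (m + r) % r = m % r := Nat.add_mod_right m r
  unfold psi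
  simp only [dif_neg (show ¬ m + r < r by omega), hmod, Nat.add_div_right m hr]
  split_ifs with hm
  · simp only [Nat.div_eq_of_lt hm, Nat.mod_eq_of_lt hm]
    exact pderiv_b0_d (hrn := hrn) hBinv hE hm
  · rw [show m / r + 1 - 1 = m / r - 1 + 1 by
      have := (Nat.one_le_div_iff hr).2 (not_lt.1 hm); omega, Function.iterate_succ_apply']

lemma pderiv_b0_mem_psiIdeal {k : ℕ} {x : R n r} (hx : x ∈ psiIdeal hr hrn d k) :
    pderiv (Sum.inr (⟨0, hr⟩ : Fin r)) x ∈ psiIdeal hr hrn d (k + r) := by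
  refine Derivation.apply_mem_of_mem_span _ (psiIdeal_mono (by omega)) ?_ hx
  rintro _ ⟨m, rfl⟩
  rw [pderiv_b0_psi hBinv hE]
  exact psi_mem_psiIdeal (by omega)

lemma coeffDeriv_b0_Binv_pow_mul_Dser (s : ℕ) :
    coeffDeriv (pderiv (Sum.inr (⟨0, hr⟩ : Fin r))) (Binv ^ s * Dser n r d) =
      -((s + 1) • (PowerSeries.X ^ r * (Binv ^ (s + 1) * Dser n r d)))
        - PowerSeries.X ^ (n + 1) *
          (Binv ^ (s + 1) * coeffDeriv (pderiv (Sum.inr (⟨0, hr⟩ : Fin r))) E) := by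
  rw [Derivation.leibniz, coeffDeriv_pderiv_Binv_pow hBinv, coeffDeriv_pderiv_Dser hBinv hE,
    smul_eq_mul, smul_eq_mul, Fin.val_mk, Nat.sub_zero]
  ring

lemma coeff_Binv_pow_mul_Dser_mem_psiIdeal (s : ℕ) {j : ℕ} (hj : n + 1 ≤ j + (s + 1) * r) :
    PowerSeries.coeff j (Binv ^ s * Dser n r d) ∈ psiIdeal hr hrn d ((s + 1) * r) := by
  induction s generalizing j with
  | zero => simpa using coeff_Dser_mem_psiIdeal (by simpa using hj)
  | succ s ih =>
    have h := congrArg (PowerSeries.coeff (j + r))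
      (coeffDeriv_b0_Binv_pow_mul_Dser (hr := hr) hBinv hE s)
    rw [coeff_coeffDeriv, map_sub, map_neg, map_nsmul, PowerSeries.coeff_X_pow_mul] at h
    have hδ : pderiv (Sum.inr (⟨0, hr⟩ : Fin r))
        (PowerSeries.coeff (j + r) (Binv ^ s * Dser n r d))
        ∈ psiIdeal hr hrn d ((s + 1 + 1) * r) := by
      rw [show (s + 1 + 1) * r = (s + 1) * r + r by ring]
      exact pderiv_b0_mem_psiIdeal hBinv hE (ih (by nlinarith))
    have hT : PowerSeries.coeff (j + r) (PowerSeries.X ^ (n + 1) *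
        (Binv ^ (s + 1) * coeffDeriv (pderiv (Sum.inr (⟨0, hr⟩ : Fin r))) E))
        ∈ psiIdeal hr hrn d ((s + 1 + 1) * r) := by
      refine PowerSeries.coeff_mul_mem_of_forall_coeff_mem _
        (PowerSeries.coeff_mul_mem_of_forall_coeff_mem _ fun m => ?_) _
      rw [coeff_coeffDeriv]
      refine psiIdeal_mono ?_ (pderiv_b0_mem_psiIdeal hBinv hE (coeff_remainder_mem_psiIdeal hE m))
      nlinarith
    have hS := add_mem hδ hT
    rw [h, sub_add_cancel, neg_mem_iff] at hS
    exact Ideal.mem_of_nsmul_mem _ s.succ_ne_zero hS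

end Remainder

lemma exists_Aser_eq_Bser_mul_Dser_add {d : Fin n → R n r} (hd : dSpec n r d) :
    ∃ E, Aser n r = Bser n r * Dser n r d + PowerSeries.X ^ (n + 1) * E := by
  obtain ⟨E, hE⟩ : PowerSeries.X ^ (n + 1) ∣ Aser n r - Bser n r * Dser n r d :=
    PowerSeries.X_pow_dvd_iff.2 fun k hk => by rw [map_sub, hd k (by omega), sub_self]
  exact ⟨E, by rw [← hE]; ring⟩

section Quotient

variable (hr : 0 < r) (hrn : r ≤ n) {d : Fin n → R n r} {Binv E : PowerSeries (R n r)}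

lemma map_Aser_eq {J : Ideal (R n r)} (hJ : psiIdeal hr hrn d r ≤ J)
    (hE : Aser n r = Bser n r * Dser n r d + PowerSeries.X ^ (n + 1) * E) :
    PowerSeries.map (Ideal.Quotient.mk J) (Aser n r) =
      PowerSeries.map (Ideal.Quotient.mk J) (Bser n r * Dser n r d) := by
  have hE0 : PowerSeries.map (Ideal.Quotient.mk J) E = 0 := by
    ext m
    rw [PowerSeries.coeff_map, map_zero, Ideal.Quotient.eq_zero_iff_mem]
    exact hJ (coeff_remainder_mem_psiIdeal hE m)
  rw [hE, map_add, map_mul (PowerSeries.map _) (PowerSeries.X ^ _), hE0, mul_zero, add_zero]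

lemma map_ser_eq_map_Binv_pow_mul_Dser {q r1 : ℕ} (hn : n = (q + 1) * r + r1)
    (hBinv : Bser n r * Binv = 1)
    (hE : Aser n r = Bser n r * Dser n r d + PowerSeries.X ^ (n + 1) * E) {γ : ℕ → R n r}
    (hγ : ∀ k, 1 ≤ k → k ≤ r1 →
      γ (n - k) = PowerSeries.coeff k (Binv ^ (q + 1) * Aser n r)) :
    PowerSeries.map (Ideal.Quotient.mk (psiIdeal hr hrn d ((q + 1) * r)))
        (ser r1 fun k => γ (n - k)) =
      PowerSeries.map (Ideal.Quotient.mk (psiIdeal hr hrn d ((q + 1) * r)))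
        (Binv ^ q * Dser n r d) := by
  set π := PowerSeries.map (Ideal.Quotient.mk (psiIdeal hr hrn d ((q + 1) * r)))
  have hA : π (Aser n r) = π (Bser n r * Dser n r d) :=
    map_Aser_eq hr hrn (psiIdeal_mono (by nlinarith)) hE
  have hBinvA : π (Binv ^ (q + 1) * Aser n r) = π (Binv ^ q * Dser n r d) := by
    have hBB : π (Bser n r) * π Binv = 1 := by rw [← map_mul, hBinv, map_one]
    rw [map_mul, hA, map_mul, map_mul, map_pow, map_pow]
    linear_combination π Binv ^ q * π (Dser n r d) * hBB
  have hBinv0 : PowerSeries.constantCoeff Binv = 1 := by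
    simpa [Bser] using congrArg PowerSeries.constantCoeff hBinv
  ext k
  rw [PowerSeries.coeff_map, PowerSeries.coeff_map, coeff_ser]
  rcases Nat.eq_zero_or_pos k with rfl | hk0
  · simp [hBinv0, Dser]
  rw [if_neg hk0.ne']
  by_cases hk : k ≤ r1
  · rw [if_pos hk, hγ k hk0 hk, ← PowerSeries.coeff_map, hBinvA, PowerSeries.coeff_map]
  · rw [if_neg hk, map_zero, eq_comm, Ideal.Quotient.eq_zero_iff_mem]
    exact coeff_Binv_pow_mul_Dser_mem_psiIdeal hBinv hE q (by omega)

lemma map_Aser_mul_Bser_eq {q r1 : ℕ} (hn : n = (q + 1) * r + r1)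
    (hBinv : Bser n r * Binv = 1)
    (hE : Aser n r = Bser n r * Dser n r d + PowerSeries.X ^ (n + 1) * E) {γ : ℕ → R n r}
    (hγ : ∀ k, 1 ≤ k → k ≤ r1 →
      γ (n - k) = PowerSeries.coeff k (Binv ^ (q + 1) * Aser n r)) :
    PowerSeries.map (Ideal.Quotient.mk (psiIdeal hr hrn d ((q + 1) * r)))
        (Aser n r * Bser n r) =
      PowerSeries.map (Ideal.Quotient.mk (psiIdeal hr hrn d ((q + 1) * r)))
        ((ser r1 fun k => γ (n - k)) * Bser n r ^ (q + 1 + 1)) := by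
  set π := PowerSeries.map (Ideal.Quotient.mk (psiIdeal hr hrn d ((q + 1) * r)))
  have hA : π (Aser n r) = π (Bser n r) * π (Dser n r d) := by
    rw [← map_mul]; exact map_Aser_eq hr hrn (psiIdeal_mono (by nlinarith)) hE
  have hG : π (ser r1 fun k => γ (n - k)) = π Binv ^ q * π (Dser n r d) := by
    rw [← map_pow, ← map_mul]; exact map_ser_eq_map_Binv_pow_mul_Dser hr hrn hn hBinv hE hγ
  have hBB : (π (Bser n r) * π Binv) ^ q = 1 := by rw [← map_mul, hBinv, map_one, one_pow]
  rw [map_mul, map_mul, map_pow, hA, hG]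
  linear_combination (-(π (Dser n r d) * π (Bser n r) ^ 2)) * hBB

end Quotient

end Series

/-- Lemma 3.16: with `τ` defined by
`(1 + γ_{n-1}t + ⋯ + γ_{n-r_1}t^{r_1})·(1 + b_{r-1}t + ⋯ + b_0t^r)^{q_1+1}
≡ 1 + τ_{n+r-1}t + ⋯ + τ_0 t^{n+r} (mod t^{n+r+1})`, one has
`c_i ≡ τ_i (mod (ψ_0,…,ψ_{q_1r-1}))` for all `0 ≤ i ≤ n+r-1`. -/
theorem stmt19 (n r q1 r1 : ℕ) (hq1 : 1 ≤ q1) (h2 : r1 < r)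
    (hn : n = q1 * r + r1)
    (d : Fin n → R n r) (hd : dSpec n r d)
    (Binv : PowerSeries (R n r)) (hBinv : Bser n r * Binv = 1)
    (γ : ℕ → R n r)
    (hγ : ∀ k, 1 ≤ k → k ≤ r1 →
      γ (n - k) = PowerSeries.coeff k (Binv ^ q1 * Aser n r)) :
    ∀ i : Fin (n + r),
      cc n r i - PowerSeries.coeff ((n + r) - (i : ℕ))
          (ser r1 (fun k => γ (n - k)) * Bser n r ^ (q1 + 1)) ∈
        Ideal.span (Set.range fun m : Fin (q1 * r) =>
          psi n r (by omega) (rle q1 r r1 n (by omega) hn) d (m : ℕ)) := by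
  intro i
  obtain ⟨q, rfl⟩ : ∃ q, q1 = q + 1 := ⟨q1 - 1, by omega⟩
  obtain ⟨E, hE⟩ := exists_Aser_eq_Bser_mul_Dser_add hd
  rw [← Ideal.Quotient.eq_zero_iff_mem, map_sub, sub_eq_zero, cc_eq_coeff_Aser_mul_Bser,
    ← PowerSeries.coeff_map, ← PowerSeries.coeff_map]
  exact congrArg _ (map_Aser_mul_Bser_eq _ _ hn hBinv hE hγ)

end TB
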